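/- arXiv:0705.3918 — 3 statements merged into one kernel-verified Lean document; each statement's English description precedes it below -/
import Mathlib

section
/- Let Φ = (A; {E_i}; A*; {E*_i}) be a Leonard system in A. Then there exists a unique antiautomorphism † of A such that A† = A and (A*)† = A*. -/
open Matrix Polynomial

/-- A Leonard system in the matrix algebra `Mat_{d+1}(K)`: multiplicity-free
elements `A`, `Astar` with orderings `E`, `Estar` of their primitive idempotents
satisfying the irreducible-tridiagonality conditions. -/
structure LeonardSystem (K : Type*) [Field K] (d : ℕ) where
  A : Matrix (Fin (d+1)) (Fin (d+1)) K
  Astar : Matrix (Fin (d+1)) (Fin (d+1)) K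
  E : Fin (d+1) → Matrix (Fin (d+1)) (Fin (d+1)) K
  Estar : Fin (d+1) → Matrix (Fin (d+1)) (Fin (d+1)) K
  θ : Fin (d+1) → K
  θs : Fin (d+1) → K
  θ_inj : Function.Injective θ
  θs_inj : Function.Injective θs
  E_ne : ∀ i, E i ≠ 0
  Es_ne : ∀ i, Estar i ≠ 0
  E_mul : ∀ i j, E i * E j = if i = j then E i else 0
  Es_mul : ∀ i j, Estar i * Estar j = if i = j then Estar i else 0
  E_sum : ∑ i, E i = 1
  Es_sum : ∑ i, Estar i = 1
  A_eq : A = ∑ i, θ i • E i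
  As_eq : Astar = ∑ i, θs i • Estar i
  trid0 : ∀ i j : Fin (d+1), ((i : ℤ) - (j : ℤ)).natAbs > 1 → E i * Astar * E j = 0
  trid1 : ∀ i j : Fin (d+1), ((i : ℤ) - (j : ℤ)).natAbs = 1 → E i * Astar * E j ≠ 0
  strid0 : ∀ i j : Fin (d+1), ((i : ℤ) - (j : ℤ)).natAbs > 1 → Estar i * A * Estar j = 0
  strid1 : ∀ i j : Fin (d+1), ((i : ℤ) - (j : ℤ)).natAbs = 1 → Estar i * A * Estar j ≠ 0

namespace LeonardSystem

variable {K : Type*} [Field K] {d : ℕ}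

/-- Eigenvalues indexed by `ℕ` (junk value outside range). -/
def θN (L : LeonardSystem K d) (i : ℕ) : K := if h : i < d + 1 then L.θ ⟨i, h⟩ else 0

def θsN (L : LeonardSystem K d) (i : ℕ) : K := if h : i < d + 1 then L.θs ⟨i, h⟩ else 0

/-- `τ_i(A) = (A-θ₀)(A-θ₁)⋯(A-θ_{i-1})`. -/
def tauA (L : LeonardSystem K d) : ℕ → Matrix (Fin (d+1)) (Fin (d+1)) K
  | 0 => 1
  | i + 1 => L.tauA i * (L.A - L.θN i • 1)

/-- `η_i(A) = (A-θ_d)(A-θ_{d-1})⋯(A-θ_{d-i+1})`. -/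
def etaA (L : LeonardSystem K d) : ℕ → Matrix (Fin (d+1)) (Fin (d+1)) K
  | 0 => 1
  | i + 1 => L.etaA i * (L.A - L.θN (d - i) • 1)

/-- `τ*_i(A*)`. -/
def tausA (L : LeonardSystem K d) : ℕ → Matrix (Fin (d+1)) (Fin (d+1)) K
  | 0 => 1
  | i + 1 => L.tausA i * (L.Astar - L.θsN i • 1)

/-- `η*_i(A*)`. -/
def etasA (L : LeonardSystem K d) : ℕ → Matrix (Fin (d+1)) (Fin (d+1)) K
  | 0 => 1
  | i + 1 => L.etasA i * (L.Astar - L.θsN (d - i) • 1)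

/-- Scalar `τ_i(x)`. -/
def tauS (L : LeonardSystem K d) (i : ℕ) (x : K) : K := ∏ j ∈ Finset.range i, (x - L.θN j)

/-- Scalar `η_i(x)`. -/
def etaS (L : LeonardSystem K d) (i : ℕ) (x : K) : K := ∏ j ∈ Finset.range i, (x - L.θN (d - j))

/-- Scalar `τ*_i(x)`. -/
def tausS (L : LeonardSystem K d) (i : ℕ) (x : K) : K := ∏ j ∈ Finset.range i, (x - L.θsN j)

/-- Scalar `η*_i(x)`. -/
def etasS (L : LeonardSystem K d) (i : ℕ) (x : K) : K := ∏ j ∈ Finset.range i, (x - L.θsN (d - j))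

/-- First split sequence `φ_i`. -/
noncomputable def varphi (L : LeonardSystem K d) (i : ℕ) : K :=
  (L.θsN 0 - L.θsN i) * (L.tauA i * L.Estar 0).trace / (L.tauA (i-1) * L.Estar 0).trace

/-- Second split sequence `ϕ_i`. -/
noncomputable def phi (L : LeonardSystem K d) (i : ℕ) : K :=
  (L.θsN 0 - L.θsN i) * (L.etaA i * L.Estar 0).trace / (L.etaA (i-1) * L.Estar 0).trace

/-- `φ₁φ₂⋯φ_r`. -/
noncomputable def varphiProd (L : LeonardSystem K d) (r : ℕ) : K :=
  ∏ j ∈ Finset.range r, L.varphi (j + 1)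

/-- `ϕ₁ϕ₂⋯ϕ_r`. -/
noncomputable def phiProd (L : LeonardSystem K d) (r : ℕ) : K :=
  ∏ j ∈ Finset.range r, L.phi (j + 1)

/-- `φ_d φ_{d-1} ⋯ φ_{d-r+1}`. -/
noncomputable def varphiRevProd (L : LeonardSystem K d) (r : ℕ) : K :=
  ∏ j ∈ Finset.range r, L.varphi (d - j)

/-- `ϕ_d ϕ_{d-1} ⋯ ϕ_{d-r+1}`. -/
noncomputable def phiRevProd (L : LeonardSystem K d) (r : ℕ) : K :=
  ∏ j ∈ Finset.range r, L.phi (d - j)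

end LeonardSystem

/-!
Conjugating by a matrix `P` that sends the primitive idempotents `E*_i` to the diagonal matrix
units turns `A*` into the diagonal matrix `D` of its distinct eigenvalues and `A` into an
irreducible tridiagonal matrix `B`. Such a `B` satisfies `C Bᵀ = B C` for an invertible diagonal
`C` (take `C_{i+1} / C_i = B_{i+1,i} / B_{i,i+1}`), and `C` commutes with `D`; hence
`X ↦ N Xᵀ N⁻¹` with `N = P C Pᵀ` is an antiautomorphism fixing `A` and `A*`.

For uniqueness, `A` and `A*` generate the whole matrix algebra: polynomials in `D` give the
diagonal matrix units `e_ii`, then `e_ii B e_jj = B_ij e_ij` gives `e_ij` for `|i - j| = 1`, and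
products of these give every `e_ij`. Two unital antihomomorphisms agreeing on generators agree.
-/

theorem map_one_of_surjective_of_map_mul_rev {M N : Type*} [MulOneClass M] [MulOneClass N]
    {f : M → N} (hf : Function.Surjective f) (hmul : ∀ x y, f (x * y) = f y * f x) :
    f 1 = 1 := by
  obtain ⟨x, hx⟩ := hf 1
  calc f 1 = f 1 * f x := by rw [hx, mul_one]
    _ = 1 := by rw [← hmul, mul_one, hx]

theorem LinearMap.ext_of_adjoin_eq_top_of_map_mul_rev {R A B : Type*} [CommSemiring R]
    [Semiring A] [Algebra R A] [Semiring B] [Algebra R B] {s : Set A}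
    (hs : Algebra.adjoin R s = ⊤) {σ τ : A →ₗ[R] B}
    (hσ : ∀ x y, σ (x * y) = σ y * σ x) (hτ : ∀ x y, τ (x * y) = τ y * τ x)
    (hσ1 : σ 1 = 1) (hτ1 : τ 1 = 1) (h : Set.EqOn σ τ s) : σ = τ := by
  ext x
  have hx : x ∈ Algebra.adjoin R s := hs ▸ Algebra.mem_top
  induction hx using Algebra.adjoin_induction with
  | mem x hx => exact h hx
  | algebraMap r => simp [Algebra.algebraMap_eq_smul_one, hσ1, hτ1]
  | add x y _ _ hx hy => simp [hx, hy]
  | mul x y _ _ hx hy => rw [hσ, hτ, hx, hy]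

theorem Algebra.adjoin_image_eq_top {R A B : Type*} [CommSemiring R] [Semiring A] [Algebra R A]
    [Semiring B] [Algebra R B] {f : A →ₐ[R] B} (hf : Function.Surjective f) {s : Set A}
    (h : Algebra.adjoin R s = ⊤) : Algebra.adjoin R (f '' s) = ⊤ := by
  rw [Algebra.adjoin_image, h, Algebra.map_top, (AlgHom.range_eq_top f).mpr hf]

namespace Matrix

variable {n : Type*} [Fintype n] [DecidableEq n]

section Field

variable {K : Type*} [Field K]

theorem diagonal_mem_adjoin_diagonal {θ : n → K} (hθ : Function.Injective θ) (f : n → K) :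
    diagonal f ∈ Algebra.adjoin K {diagonal θ} := by
  have hf : f = aeval θ (Lagrange.interpolate Finset.univ θ f) := by
    ext i
    rw [aeval_pi_apply₂, coe_aeval_eq_eval,
      Lagrange.eval_interpolate_at_node f hθ.injOn (Finset.mem_univ i)]
  rw [hf]
  convert aeval_mem_adjoin_singleton K (diagonal θ) using 1
  exact (aeval_algHom_apply (diagonalAlgHom K) θ _).symm

theorem adjoin_diagonal_pair_eq_top_of_preconnected {θ : n → K} (hθ : Function.Injective θ)
    {B : Matrix n n K} {G : SimpleGraph n} (hG : G.Preconnected)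
    (hB : ∀ i j, G.Adj i j → B i j ≠ 0) :
    Algebra.adjoin K {diagonal θ, B} = ⊤ := by
  set S := Algebra.adjoin K {diagonal θ, B}
  have hdiag : ∀ i, single i i (1 : K) ∈ S := fun i => by
    rw [← diagonal_single]
    exact Algebra.adjoin_mono (by simp) (diagonal_mem_adjoin_diagonal hθ _)
  have hadj : ∀ i j, G.Adj i j → single i j (1 : K) ∈ S := fun i j hij => by
    have h : single i i 1 * B * single j j 1 ∈ S :=
      mul_mem (mul_mem (hdiag i) (Algebra.subset_adjoin (by simp))) (hdiag j)
    rw [single_mul_mul_single, one_mul, mul_one] at h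
    have := S.smul_mem h (B i j)⁻¹
    rwa [smul_single, smul_eq_mul, inv_mul_cancel₀ (hB i j hij)] at this
  have hwalk : ∀ i j (p : G.Walk i j), single i j (1 : K) ∈ S := fun i j p => by
    induction p with
    | nil => exact hdiag _
    | cons h _ ih => simpa using mul_mem (hadj _ _ h) ih
  refine eq_top_iff.mpr fun X _ => ?_
  rw [matrix_eq_sum_single X]
  refine sum_mem fun i _ => sum_mem fun j _ => ?_
  simpa using S.smul_mem (hwalk i j (hG i j).some) (X i j)

theorem exists_isUnit_inv_mul_mul_eq_single {E : n → Matrix n n K} (hE0 : ∀ i, E i ≠ 0)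
    (hE : ∀ i j, E i * E j = if i = j then E i else 0) :
    ∃ P : Matrix n n K, IsUnit P ∧ ∀ i, P⁻¹ * E i * P = single i i 1 := by
  have hw : ∀ i, ∃ w, E i *ᵥ w ≠ 0 := fun i => by
    by_contra! h
    exact hE0 i (ext_iff_mulVec.mpr fun w => by simp [h])
  choose w hw using hw
  set v : n → n → K := fun i => E i *ᵥ w i
  have hEv : ∀ i j, E i *ᵥ v j = if i = j then v j else 0 := fun i j => by
    simp only [v, mulVec_mulVec, hE]
    split_ifs with h <;> simp [h]
  set P : Matrix n n K := of fun r i => v i r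
  have hP : IsUnit P := by
    rw [← linearIndependent_cols_iff_isUnit, show P.col = v from rfl]
    refine linearIndependent_iff'.mpr fun s g hg i hi => ?_
    have := congrArg (E i *ᵥ ·) hg
    simp only [mulVec_sum, mulVec_smul, hEv, smul_ite, smul_zero, Finset.sum_ite_eq, hi,
      if_true, mulVec_zero, smul_eq_zero] at this
    exact this.resolve_right (hw i)
  have hEP : ∀ i, E i * P = P * single i i 1 := fun i => by
    ext a b
    change (E i *ᵥ v b) a = _
    rw [hEv]
    by_cases h : i = b
    · subst h; simp [P]
    · simp [h, mul_single_apply_of_ne (hbj := Ne.symm h)]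
  refine ⟨P, hP, fun i => ?_⟩
  rw [mul_assoc, hEP, ← mul_assoc, nonsing_inv_mul P ((isUnit_iff_isUnit_det P).mp hP), one_mul]

end Field

def IsIrreducibleTridiagonal {α : Type*} [Zero α] {m : ℕ} (B : Matrix (Fin m) (Fin m) α) :
    Prop :=
  (∀ i j : Fin m, 1 < ((i : ℤ) - j).natAbs → B i j = 0) ∧
    ∀ i j : Fin m, ((i : ℤ) - j).natAbs = 1 → B i j ≠ 0

namespace IsIrreducibleTridiagonal

variable {K : Type*} [Field K] {m : ℕ} {B : Matrix (Fin m) (Fin m) K}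

theorem adjoin_diagonal_pair_eq_top (hB : B.IsIrreducibleTridiagonal) {θ : Fin m → K}
    (hθ : Function.Injective θ) : Algebra.adjoin K {diagonal θ, B} = ⊤ :=
  adjoin_diagonal_pair_eq_top_of_preconnected hθ (SimpleGraph.pathGraph_preconnected m)
    fun i j h => hB.2 i j (by rw [SimpleGraph.pathGraph_adj] at h; omega)

theorem exists_diagonal_mul_transpose_eq (hB : B.IsIrreducibleTridiagonal) :
    ∃ c : Fin m → K, (∀ i, c i ≠ 0) ∧ diagonal c * Bᵀ = B * diagonal c := by
  obtain _ | m := m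
  · exact ⟨0, finZeroElim, Subsingleton.elim _ _⟩
  have hup (k : Fin m) : B k.castSucc k.succ ≠ 0 := hB.2 _ _ (by simp)
  have hdown (k : Fin m) : B k.succ k.castSucc ≠ 0 := hB.2 _ _ (by simp)
  let c : Fin (m + 1) → K := fun i => Fin.induction 1
    (fun k ck => ck * B k.succ k.castSucc / B k.castSucc k.succ) i
  have hc_succ (k : Fin m) :
      c k.succ = c k.castSucc * B k.succ k.castSucc / B k.castSucc k.succ :=
    Fin.induction_succ ..
  have hc : ∀ i, c i ≠ 0 := Fin.induction one_ne_zero fun k hk => by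
    rw [hc_succ]; exact div_ne_zero (mul_ne_zero hk (hdown k)) (hup k)
  have hadj (k : Fin m) :
      c k.castSucc * B k.succ k.castSucc = B k.castSucc k.succ * c k.succ := by
    rw [hc_succ]; field_simp [hup k]
  refine ⟨c, hc, ext fun i j => ?_⟩
  simp only [diagonal_mul, mul_diagonal, transpose_apply]
  rcases lt_trichotomy ((i : ℤ) - j).natAbs 1 with h | h | h
  · obtain rfl : i = j := Fin.ext (by omega)
    exact mul_comm _ _
  · rcases Int.natAbs_eq_iff.mp h with h' | h'
    · obtain ⟨k, rfl, rfl⟩ : ∃ k : Fin m, i = k.succ ∧ j = k.castSucc :=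
        ⟨⟨j, by omega⟩, Fin.ext (by simp; omega), rfl⟩
      linear_combination -hadj k
    · obtain ⟨k, rfl, rfl⟩ : ∃ k : Fin m, i = k.castSucc ∧ j = k.succ :=
        ⟨⟨i, by omega⟩, rfl, Fin.ext (by simp; omega)⟩
      exact hadj k
  · rw [hB.1 i j h, hB.1 j i (by omega), mul_zero, zero_mul]

end IsIrreducibleTridiagonal

section transposeConj

variable {R : Type*} [CommRing R] (N : Matrix n n R)

noncomputable def transposeConj : Matrix n n R →ₗ[R] Matrix n n R where
  toFun X := N * Xᵀ * N⁻¹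
  map_add' X Y := by simp [mul_add, add_mul]
  map_smul' a X := by simp

@[simp]
theorem transposeConj_apply (X : Matrix n n R) : transposeConj N X = N * Xᵀ * N⁻¹ := rfl

variable {N}

theorem transposeConj_mul (hN : IsUnit N) (X Y : Matrix n n R) :
    transposeConj N (X * Y) = transposeConj N Y * transposeConj N X := by
  simp [mul_assoc, nonsing_inv_mul_cancel_left _ _ ((isUnit_iff_isUnit_det N).mp hN)]

theorem transposeConj_bijective (hN : IsUnit N) : Function.Bijective (transposeConj N) := by
  have hN' := (isUnit_iff_isUnit_det N).mp hN
  refine Function.bijective_iff_has_inverse.mpr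
    ⟨fun Y => (N⁻¹ * Y * N)ᵀ, fun X => ?_, fun Y => ?_⟩ <;>
    simp [mul_assoc, nonsing_inv_mul_cancel_left _ _ hN', mul_nonsing_inv_cancel_left _ _ hN',
      nonsing_inv_mul _ hN', mul_nonsing_inv _ hN']

theorem transposeConj_eq_self_iff (hN : IsUnit N) {X : Matrix n n R} :
    transposeConj N X = X ↔ N * Xᵀ = X * N := by
  have hN' := (isUnit_iff_isUnit_det N).mp hN
  rw [transposeConj_apply]
  constructor <;> intro h
  · calc N * Xᵀ = N * Xᵀ * N⁻¹ * N := by rw [mul_assoc _ N⁻¹, nonsing_inv_mul _ hN', mul_one]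
      _ = X * N := by rw [h]
  · rw [h, mul_assoc, mul_nonsing_inv _ hN', mul_one]

theorem mul_transpose_eq_of_inv_mul_mul_eq {P X Y C : Matrix n n R} (hP : IsUnit P)
    (hY : P⁻¹ * X * P = Y) (hC : C * Yᵀ = Y * C) :
    P * C * Pᵀ * Xᵀ = X * (P * C * Pᵀ) := by
  have hP' := (isUnit_iff_isUnit_det P).mp hP
  have hX : X = P * Y * P⁻¹ := by
    rw [← hY, ← mul_assoc, mul_nonsing_inv_cancel_left _ _ hP',
      mul_nonsing_inv_cancel_right _ _ hP']
  have hPT (Z : Matrix n n R) : Pᵀ * (P⁻¹ᵀ * Z) = Z := by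
    rw [← mul_assoc, ← transpose_mul, nonsing_inv_mul _ hP', transpose_one, one_mul]
  calc P * C * Pᵀ * Xᵀ = P * (C * Yᵀ) * Pᵀ := by
        simp only [hX, transpose_mul, mul_assoc, hPT]
    _ = P * (Y * C) * Pᵀ := by rw [hC]
    _ = X * (P * C * Pᵀ) := by simp [hX, mul_assoc, nonsing_inv_mul_cancel_left _ _ hP']

end transposeConj

end Matrix

namespace LeonardSystem

variable {K : Type*} [Field K] {d : ℕ} (L : LeonardSystem K d)
  {P : Matrix (Fin (d + 1)) (Fin (d + 1)) K}

theorem inv_mul_Astar_mul_eq_diagonal (hPE : ∀ i, P⁻¹ * L.Estar i * P = single i i 1) :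
    P⁻¹ * L.Astar * P = diagonal L.θs := by
  simp_rw [L.As_eq, Matrix.mul_sum, Matrix.sum_mul, mul_smul_comm, smul_mul_assoc, hPE,
    smul_single, smul_eq_mul, mul_one, sum_single_eq_diagonal]

theorem isIrreducibleTridiagonal_inv_mul_A_mul (hP : IsUnit P)
    (hPE : ∀ i, P⁻¹ * L.Estar i * P = single i i 1) :
    (P⁻¹ * L.A * P).IsIrreducibleTridiagonal := by
  have hP' := (isUnit_iff_isUnit_det P).mp hP
  have hsandwich : ∀ i j,
      P⁻¹ * (L.Estar i * L.A * L.Estar j) * P = single i j ((P⁻¹ * L.A * P) i j) :=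
    fun i j => calc
      P⁻¹ * (L.Estar i * L.A * L.Estar j) * P
          = (P⁻¹ * L.Estar i * P) * (P⁻¹ * L.A * P) * (P⁻¹ * L.Estar j * P) := by
        simp only [mul_assoc, mul_nonsing_inv_cancel_left _ _ hP']
      _ = single i j ((P⁻¹ * L.A * P) i j) := by
        rw [hPE, hPE, single_mul_mul_single, one_mul, mul_one]
  refine ⟨fun i j h => ?_, fun i j h hB => L.strid1 i j h ?_⟩
  · simpa [L.strid0 i j h] using (congrFun (congrFun (hsandwich i j) i) j).symm
  · have h0 := congrArg (fun Y => P * Y * P⁻¹) (hsandwich i j)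
    simpa [hB, mul_assoc, mul_nonsing_inv_cancel_left _ _ hP', mul_nonsing_inv _ hP'] using h0

theorem adjoin_A_Astar_eq_top : Algebra.adjoin K {L.A, L.Astar} = ⊤ := by
  obtain ⟨P, hP, hPE⟩ := exists_isUnit_inv_mul_mul_eq_single L.Es_ne L.Es_mul
  have hgen := (L.isIrreducibleTridiagonal_inv_mul_A_mul hP hPE).adjoin_diagonal_pair_eq_top
    L.θs_inj
  rw [← L.inv_mul_Astar_mul_eq_diagonal hPE] at hgen
  have hP' := (isUnit_iff_isUnit_det P).mp hP
  let φ := MulSemiringAction.toAlgEquiv K (Matrix (Fin (d + 1)) (Fin (d + 1)) K)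
    (ConjAct.toConjAct hP.unit)
  have hφ (X : Matrix (Fin (d + 1)) (Fin (d + 1)) K) : φ (P⁻¹ * X * P) = X := by
    simp only [φ, MulSemiringAction.toAlgEquiv_apply, ConjAct.units_smul_def,
      ConjAct.ofConjAct_toConjAct, coe_units_inv, IsUnit.unit_spec]
    rw [← mul_assoc, ← mul_assoc, mul_nonsing_inv _ hP', one_mul,
      mul_nonsing_inv_cancel_right _ _ hP']
  have hconj := Algebra.adjoin_image_eq_top (f := φ.toAlgHom) φ.surjective hgen
  rwa [AlgEquiv.coe_toAlgHom, Set.image_pair, hφ, hφ, Set.pair_comm] at hconj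

end LeonardSystem

/-- There is a unique antiautomorphism `†` of the matrix algebra fixing both
`A` and `A*` of a Leonard system. -/
theorem LeonardSystem.exists_unique_antiautomorphism {K : Type*} [Field K] {d : ℕ}
    (L : LeonardSystem K d) :
    ∃! σ : (Matrix (Fin (d+1)) (Fin (d+1)) K) →ₗ[K] Matrix (Fin (d+1)) (Fin (d+1)) K,
      (∀ X Y, σ (X * Y) = σ Y * σ X) ∧ Function.Bijective σ ∧
      σ L.A = L.A ∧ σ L.Astar = L.Astar := by
  obtain ⟨P, hP, hPE⟩ := exists_isUnit_inv_mul_mul_eq_single L.Es_ne L.Es_mul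
  obtain ⟨c, hc, hcB⟩ :=
    (L.isIrreducibleTridiagonal_inv_mul_A_mul hP hPE).exists_diagonal_mul_transpose_eq
  have hN : IsUnit (P * diagonal c * Pᵀ) :=
    (hP.mul (isUnit_diagonal.mpr (Pi.isUnit_iff.mpr fun i => (hc i).isUnit))).mul
      (by rwa [isUnit_transpose])
  have hNA : transposeConj (P * diagonal c * Pᵀ) L.A = L.A :=
    (transposeConj_eq_self_iff hN).mpr (mul_transpose_eq_of_inv_mul_mul_eq hP rfl hcB)
  have hNAs : transposeConj (P * diagonal c * Pᵀ) L.Astar = L.Astar :=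
    (transposeConj_eq_self_iff hN).mpr (mul_transpose_eq_of_inv_mul_mul_eq hP
      (L.inv_mul_Astar_mul_eq_diagonal hPE) (by simp [diagonal_mul_diagonal, mul_comm]))
  refine ⟨transposeConj _, ⟨transposeConj_mul hN, transposeConj_bijective hN, hNA, hNAs⟩, ?_⟩
  rintro σ ⟨hσ, hσbij, hσA, hσAs⟩
  refine LinearMap.ext_of_adjoin_eq_top_of_map_mul_rev L.adjoin_A_Astar_eq_top hσ
    (transposeConj_mul hN) (map_one_of_surjective_of_map_mul_rev hσbij.2 hσ)
    (map_one_of_surjective_of_map_mul_rev (transposeConj_bijective hN).2 (transposeConj_mul hN))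
    ?_
  rintro _ (rfl | rfl)
  exacts [hσA.trans hNA.symm, hσAs.trans hNAs.symm]
end

section
/- Let Φ = (A; {E_i}; A*; {E*_i}) be a Leonard system with parameter array ({θ_i}; {θ*_i}; {φ_i}; {ϕ_i}). Then for 0 ≤ i,j ≤ d, E_0 τ*_i(A*) τ_j(A) E*_0 = δ_{ij} φ_1 φ_2 ⋯ φ_i E_0 E*_0. -/
open Matrix Polynomial

/-!
Write the primitive idempotents as rank-one matrices `E_r = u_r e_rᵀ`, `E*_h = p_h q_hᵀ`
(`colE`, `rowE`, `colEs`, `rowEs`) and put `x_k = τ_k(A) p_0` (`splitVec`). Tridiagonality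
gives `E_s τ*_k(A*) E_r = 0` and `E*_s τ_k(A) E*_r = 0` for `|s - r| > k`, while
`τ_j(A) = ∑_r τ_j(θ_r) E_r` kills `E_r` for `r < j` (dually for `τ*_i(A*)`); together these make
the off-diagonal products vanish.

For the diagonal, `x_k` has no `E*_h`-component for `h > k` and no `E_r`-component for `r < k`, and
irreducibility makes both triangular systems nondegenerate, so no nonzero vector lies in
`E*_0V + ⋯ + E*_{m-1}V` and in `E_mV + ⋯ + E_dV` at once. Hence `(A* - θ*_i) x_i = f x_{i-1}`;
pairing with `q_0` identifies `f` with the trace quotient `φ_i`, and peeling one factor of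
`τ*_i(A*)` gives `E_0 τ*_i(A*) τ_i(A) E*_0 = φ_i E_0 τ*_{i-1}(A*) τ_{i-1}(A) E*_0`.
-/

section MatrixIdempotents

variable {R : Type*} [CommRing R] {n ι : Type*} [Fintype n] [DecidableEq n] [Fintype ι]
  [DecidableEq ι] {P : ι → Matrix n n R}

theorem idempotent_mul_sum_smul (hmul : ∀ i j, P i * P j = if i = j then P i else 0)
    (θ : ι → R) (r : ι) : P r * ∑ s, θ s • P s = θ r • P r := by
  simp [Finset.mul_sum, hmul]

theorem eq_sum_prod_sub_smul (hmul : ∀ i j, P i * P j = if i = j then P i else 0)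
    (hsum : ∑ i, P i = 1) (θ : ι → R) (c : ℕ → R) {M : ℕ → Matrix n n R} (h0 : M 0 = 1)
    (hs : ∀ k, M (k + 1) = M k * ((∑ s, θ s • P s) - c k • 1)) (k : ℕ) :
    M k = ∑ s, (∏ j ∈ Finset.range k, (θ s - c j)) • P s := by
  induction k with
  | zero => simp [h0, hsum]
  | succ k ih =>
    rw [hs, ih, Finset.sum_mul]
    refine Finset.sum_congr rfl fun s _ => ?_
    rw [smul_mul_assoc, mul_sub, idempotent_mul_sum_smul hmul, mul_smul_one, ← sub_smul,
      smul_smul, Finset.prod_range_succ]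

end MatrixIdempotents

section Tridiagonal

variable {R : Type*} [CommRing R] {n : Type*} [Fintype n] [DecidableEq n] {d : ℕ}
  {P : Fin (d+1) → Matrix n n R}

theorem idempotent_mul_mul_idempotent_eq_zero
    (hmul : ∀ i j, P i * P j = if i = j then P i else 0) (hsum : ∑ i, P i = 1)
    {B : Matrix n n R} (hB : ∀ s r : Fin (d+1), ((s : ℤ) - r).natAbs > 1 → P s * B * P r = 0)
    (c : ℕ → R) {M : ℕ → Matrix n n R} (h0 : M 0 = 1) (hs : ∀ k, M (k + 1) = M k * (B - c k • 1))
    {k : ℕ} {s r : Fin (d+1)} (hk : k < ((s : ℤ) - r).natAbs) : P s * M k * P r = 0 := by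
  induction k generalizing r with
  | zero =>
    have hsr : s ≠ r := by rintro rfl; simp at hk
    simp [h0, hmul, hsr]
  | succ k ih =>
    have hstep : ∀ t, P s * M k * P t * (P t * (B - c k • 1) * P r) = 0 := fun t => by
      by_cases hst : k < ((s : ℤ) - t).natAbs
      · rw [ih hst, zero_mul]
      · have htr : t ≠ r := by rintro rfl; omega
        rw [Matrix.mul_sub, Matrix.sub_mul, hB t r (by omega), mul_smul_one, smul_mul_assoc,
          hmul, if_neg htr, smul_zero, sub_zero, mul_zero]
    calc P s * M (k + 1) * P r = ∑ t, P s * M k * P t * (P t * (B - c k • 1) * P r) := by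
          have hPt : ∀ t, P s * M k * P t * (P t * (B - c k • 1) * P r) =
              P s * M k * P t * (B - c k • 1) * P r := fun t => by
            simp only [← Matrix.mul_assoc]
            rw [Matrix.mul_assoc (P s * M k) (P t) (P t), hmul, if_pos rfl]
          rw [Finset.sum_congr rfl fun t _ => hPt t, ← Finset.sum_mul, ← Finset.sum_mul,
            ← Finset.mul_sum, hsum, mul_one, hs]
          simp only [Matrix.mul_assoc]
      _ = 0 := Finset.sum_eq_zero fun t _ => hstep t

end Tridiagonal

section RankOne

variable {R : Type*} [CommRing R] {n ι : Type*} [Fintype n] [Fintype ι]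

theorem vecMulVec_mul_mul_vecMulVec (a b c e : n → R) (M : Matrix n n R) :
    vecMulVec a b * M * vecMulVec c e = (b ⬝ᵥ M *ᵥ c) • vecMulVec a e := by
  rw [vecMulVec_mul, vecMulVec_mul_vecMulVec, ← dotProduct_mulVec, vecMulVec_smul]

theorem dotProduct_mulVec_eq_mul_of_vecMulVec_mul {a b : n → R} (hba : b ⬝ᵥ a = 1)
    {M : Matrix n n R} {c : R} (h : vecMulVec a b * M = c • vecMulVec a b) (v : n → R) :
    b ⬝ᵥ M *ᵥ v = c * (b ⬝ᵥ v) := by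
  have hb : b ᵥ* vecMulVec a b = b := by rw [vecMul_vecMulVec, hba, one_smul]
  rw [dotProduct_mulVec, ← hb, vecMul_vecMul, h, vecMul_smul, hb, smul_dotProduct, smul_eq_mul]

theorem sum_dotProduct_smul_eq [DecidableEq n] {a b : ι → n → R}
    (h : ∑ r, vecMulVec (a r) (b r) = 1) (v : n → R) : ∑ r, (b r ⬝ᵥ v) • a r = v := by
  conv_rhs => rw [← one_mulVec v, ← h, sum_mulVec]
  simp [vecMulVec_mulVec]

theorem dotProduct_mulVec_eq_sum [DecidableEq n] {a b : ι → n → R}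
    (h : ∑ r, vecMulVec (a r) (b r) = 1) (w : n → R) (M : Matrix n n R) (v : n → R) :
    w ⬝ᵥ M *ᵥ v = ∑ r, (w ⬝ᵥ M *ᵥ a r) * (b r ⬝ᵥ v) := by
  conv_lhs => rw [← sum_dotProduct_smul_eq h v]
  simp [mulVec_sum, dotProduct_sum, mulVec_smul, mul_comm]

end RankOne

section RankOneDecomposition

variable {K : Type*} [Field K] {n ι : Type*} [Fintype n] [DecidableEq n] [Fintype ι]
  [DecidableEq ι] {P : ι → Matrix n n K}

theorem exists_vecMulVec_of_orthogonal_idempotents (hcard : Fintype.card ι = Fintype.card n)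
    (hne : ∀ i, P i ≠ 0) (hmul : ∀ i j, P i * P j = if i = j then P i else 0) :
    ∃ a b : ι → n → K, (∀ i, P i = vecMulVec (a i) (b i)) ∧
      ∀ i j, b i ⬝ᵥ a j = if i = j then 1 else 0 := by
  -- The vectors `P i *ᵥ w i` are independent, so they are the columns of an invertible `U`;
  -- the rows of `U⁻¹` are the dual vectors.
  have hw : ∀ i, ∃ w, P i *ᵥ w ≠ 0 := fun i => by
    by_contra! h
    exact hne i (ext_iff_mulVec.mpr fun v => by simp [h v])
  choose w hw using hw
  set a := fun i => P i *ᵥ w i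
  have hPa : ∀ i j, P i *ᵥ a j = if i = j then a j else 0 := fun i j => by
    by_cases h : i = j
    · subst h; simp [a, mulVec_mulVec, hmul]
    · simp [a, mulVec_mulVec, hmul, h]
  let e := Fintype.equivOfCardEq hcard
  set U : Matrix n n K := Matrix.of fun k j => a (e.symm j) k
  have hU : IsUnit U := by
    refine linearIndependent_cols_iff_isUnit.mp (Fintype.linearIndependent_iff.mpr fun g hg j => ?_)
    have := congrArg (P (e.symm j) *ᵥ ·) hg
    have hcol : ∀ x, U.col x = a (e.symm x) := fun x => rfl
    simp only [mulVec_sum, mulVec_smul, mulVec_zero, hcol, hPa, e.symm_apply_eq] at this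
    simp only [e.apply_symm_apply, smul_ite, smul_zero, Finset.sum_ite_eq, Finset.mem_univ,
      if_true, smul_eq_zero] at this
    exact this.resolve_right (hw _)
  have hinv := nonsing_inv_mul U ((isUnit_iff_isUnit_det U).mp hU)
  refine ⟨a, fun i => U⁻¹ (e i), fun i => hU.mul_left_injective ?_, fun i j => ?_⟩
  · have hrow : U⁻¹ (e i) ᵥ* U = Pi.single (e i) 1 := by
      rw [← mul_apply_eq_vecMul, hinv]; ext j; exact one_eq_pi_single
    change P i * U = vecMulVec (a i) (U⁻¹ (e i)) * U
    rw [vecMulVec_mul, hrow]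
    ext k j
    have := congrFun (hPa i (e.symm j)) k
    rw [mul_apply, vecMulVec_apply]
    simp only [mulVec, dotProduct, of_apply, U, Pi.single_apply, mul_ite, mul_one, mul_zero]
      at this ⊢
    rw [this]
    by_cases h : i = e.symm j
    · subst h; simp
    · rw [if_neg h, if_neg (by rintro rfl; simp at h)]; rfl
  · simpa [mul_apply, U, dotProduct, one_apply] using congrFun (congrFun hinv (e i)) (e j)

end RankOneDecomposition

namespace LeonardSystem

variable {K : Type*} [Field K] {d : ℕ} (L : LeonardSystem K d)

noncomputable def colE : Fin (d+1) → Fin (d+1) → K :=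
  (exists_vecMulVec_of_orthogonal_idempotents rfl L.E_ne L.E_mul).choose

noncomputable def rowE : Fin (d+1) → Fin (d+1) → K :=
  (exists_vecMulVec_of_orthogonal_idempotents rfl L.E_ne L.E_mul).choose_spec.choose

noncomputable def colEs : Fin (d+1) → Fin (d+1) → K :=
  (exists_vecMulVec_of_orthogonal_idempotents rfl L.Es_ne L.Es_mul).choose

noncomputable def rowEs : Fin (d+1) → Fin (d+1) → K :=
  (exists_vecMulVec_of_orthogonal_idempotents rfl L.Es_ne L.Es_mul).choose_spec.choose

theorem E_eq_vecMulVec (r : Fin (d+1)) : L.E r = vecMulVec (L.colE r) (L.rowE r) :=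
  (exists_vecMulVec_of_orthogonal_idempotents rfl L.E_ne L.E_mul).choose_spec.choose_spec.1 r

theorem rowE_dotProduct_colE (r s : Fin (d+1)) :
    L.rowE r ⬝ᵥ L.colE s = if r = s then 1 else 0 :=
  (exists_vecMulVec_of_orthogonal_idempotents rfl L.E_ne L.E_mul).choose_spec.choose_spec.2 r s

theorem Estar_eq_vecMulVec (h : Fin (d+1)) : L.Estar h = vecMulVec (L.colEs h) (L.rowEs h) :=
  (exists_vecMulVec_of_orthogonal_idempotents rfl L.Es_ne L.Es_mul).choose_spec.choose_spec.1 h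

theorem rowEs_dotProduct_colEs (h k : Fin (d+1)) :
    L.rowEs h ⬝ᵥ L.colEs k = if h = k then 1 else 0 :=
  (exists_vecMulVec_of_orthogonal_idempotents rfl L.Es_ne L.Es_mul).choose_spec.choose_spec.2 h k

theorem colE_ne_zero (r : Fin (d+1)) : L.colE r ≠ 0 := fun h0 => by
  simpa [h0] using L.rowE_dotProduct_colE r r

theorem rowE_ne_zero (r : Fin (d+1)) : L.rowE r ≠ 0 := fun h0 => by
  simpa [h0] using L.rowE_dotProduct_colE r r

theorem colEs_ne_zero (h : Fin (d+1)) : L.colEs h ≠ 0 := fun h0 => by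
  simpa [h0] using L.rowEs_dotProduct_colEs h h

theorem rowEs_ne_zero (h : Fin (d+1)) : L.rowEs h ≠ 0 := fun h0 => by
  simpa [h0] using L.rowEs_dotProduct_colEs h h

theorem sum_vecMulVec_colE_rowE : ∑ r, vecMulVec (L.colE r) (L.rowE r) = 1 := by
  simpa only [E_eq_vecMulVec] using L.E_sum

theorem sum_smul_colE (v : Fin (d+1) → K) : ∑ r, (L.rowE r ⬝ᵥ v) • L.colE r = v :=
  sum_dotProduct_smul_eq L.sum_vecMulVec_colE_rowE v

theorem sum_vecMulVec_colEs_rowEs : ∑ h, vecMulVec (L.colEs h) (L.rowEs h) = 1 := by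
  simpa only [Estar_eq_vecMulVec] using L.Es_sum

theorem sum_smul_colEs (v : Fin (d+1) → K) : ∑ h, (L.rowEs h ⬝ᵥ v) • L.colEs h = v :=
  sum_dotProduct_smul_eq L.sum_vecMulVec_colEs_rowEs v

theorem E_mul_mul_E_eq_zero_iff (M : Matrix (Fin (d+1)) (Fin (d+1)) K) (s r : Fin (d+1)) :
    L.E s * M * L.E r = 0 ↔ L.rowE s ⬝ᵥ M *ᵥ L.colE r = 0 := by
  rw [E_eq_vecMulVec, E_eq_vecMulVec, vecMulVec_mul_mul_vecMulVec, smul_eq_zero,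
    or_iff_left (vecMulVec_ne_zero (L.colE_ne_zero s) (L.rowE_ne_zero r))]

theorem Estar_mul_mul_Estar_eq_zero_iff (M : Matrix (Fin (d+1)) (Fin (d+1)) K) (s r : Fin (d+1)) :
    L.Estar s * M * L.Estar r = 0 ↔ L.rowEs s ⬝ᵥ M *ᵥ L.colEs r = 0 := by
  rw [Estar_eq_vecMulVec, Estar_eq_vecMulVec, vecMulVec_mul_mul_vecMulVec, smul_eq_zero,
    or_iff_left (vecMulVec_ne_zero (L.colEs_ne_zero s) (L.rowEs_ne_zero r))]

theorem θN_val (r : Fin (d+1)) : L.θN r = L.θ r := dif_pos r.isLt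

theorem θsN_val (h : Fin (d+1)) : L.θsN h = L.θs h := dif_pos h.isLt

theorem tauS_eq_zero {k : ℕ} {r : Fin (d+1)} (hr : (r : ℕ) < k) : L.tauS k (L.θ r) = 0 :=
  Finset.prod_eq_zero (Finset.mem_range.mpr hr) (by rw [θN_val, sub_self])

theorem tausS_eq_zero {k : ℕ} {h : Fin (d+1)} (hh : (h : ℕ) < k) : L.tausS k (L.θs h) = 0 :=
  Finset.prod_eq_zero (Finset.mem_range.mpr hh) (by rw [θsN_val, sub_self])

theorem tauS_self_ne_zero (r : Fin (d+1)) : L.tauS r (L.θ r) ≠ 0 :=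
  Finset.prod_ne_zero_iff.mpr fun j hj => by
    have hj : j < r := Finset.mem_range.mp hj
    rw [← L.θN_val, θN, θN, dif_pos r.isLt, dif_pos (hj.trans r.isLt), sub_ne_zero]
    exact fun h => hj.ne (congrArg Fin.val (L.θ_inj h)).symm

theorem tauA_eq_sum (k : ℕ) : L.tauA k = ∑ r, L.tauS k (L.θ r) • L.E r :=
  eq_sum_prod_sub_smul L.E_mul L.E_sum L.θ L.θN rfl (fun k => by rw [← L.A_eq]; rfl) k

theorem tausA_eq_sum (k : ℕ) : L.tausA k = ∑ h, L.tausS k (L.θs h) • L.Estar h :=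
  eq_sum_prod_sub_smul L.Es_mul L.Es_sum L.θs L.θsN rfl (fun k => by rw [← L.As_eq]; rfl) k

theorem E_mul_tausA_mul_E_eq_zero {k : ℕ} {s r : Fin (d+1)} (hk : k < ((s : ℤ) - r).natAbs) :
    L.E s * L.tausA k * L.E r = 0 :=
  idempotent_mul_mul_idempotent_eq_zero L.E_mul L.E_sum L.trid0 L.θsN rfl (fun _ => rfl) hk

theorem Estar_mul_tauA_mul_Estar_eq_zero {k : ℕ} {s r : Fin (d+1)}
    (hk : k < ((s : ℤ) - r).natAbs) : L.Estar s * L.tauA k * L.Estar r = 0 :=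
  idempotent_mul_mul_idempotent_eq_zero L.Es_mul L.Es_sum L.strid0 L.θN rfl (fun _ => rfl) hk

theorem E_zero_mul_tausA_mul_tauA_mul_Estar_zero_of_lt {i j : ℕ} (hij : i < j) :
    L.E 0 * L.tausA i * L.tauA j * L.Estar 0 = 0 := by
  rw [tauA_eq_sum, Matrix.mul_sum, Finset.sum_mul]
  refine Finset.sum_eq_zero fun r _ => ?_
  rcases lt_or_ge (r : ℕ) j with hr | hr
  · rw [L.tauS_eq_zero hr, zero_smul, Matrix.mul_zero, Matrix.zero_mul]
  · rw [Matrix.mul_smul, L.E_mul_tausA_mul_E_eq_zero (by simp; omega), smul_zero,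
      Matrix.zero_mul]

theorem E_zero_mul_tausA_mul_tauA_mul_Estar_zero_of_gt {i j : ℕ} (hji : j < i) :
    L.E 0 * L.tausA i * L.tauA j * L.Estar 0 = 0 := by
  rw [tausA_eq_sum, Matrix.mul_sum, Finset.sum_mul, Finset.sum_mul]
  refine Finset.sum_eq_zero fun h _ => ?_
  rcases lt_or_ge (h : ℕ) i with hh | hh
  · rw [L.tausS_eq_zero hh, zero_smul, Matrix.mul_zero, Matrix.zero_mul, Matrix.zero_mul]
  · rw [Matrix.mul_smul, Matrix.smul_mul, Matrix.smul_mul, Matrix.mul_assoc, Matrix.mul_assoc,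
      ← Matrix.mul_assoc (L.Estar h), L.Estar_mul_tauA_mul_Estar_eq_zero (by simp; omega),
      Matrix.mul_zero, smul_zero]

theorem rowEs_dotProduct_Astar_sub_mulVec (h : Fin (d+1)) (c : K) (v : Fin (d+1) → K) :
    L.rowEs h ⬝ᵥ (L.Astar - c • 1) *ᵥ v = (L.θs h - c) * (L.rowEs h ⬝ᵥ v) := by
  refine dotProduct_mulVec_eq_mul_of_vecMulVec_mul
    ((L.rowEs_dotProduct_colEs h h).trans (if_pos rfl)) ?_ v
  rw [← Estar_eq_vecMulVec, As_eq, mul_sub, idempotent_mul_sum_smul L.Es_mul, mul_smul_one,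
    sub_smul]

noncomputable def splitVec (k : ℕ) : Fin (d+1) → K := L.tauA k *ᵥ L.colEs 0

theorem splitVec_zero : L.splitVec 0 = L.colEs 0 := by simp [splitVec, tauA]

theorem splitVec_succ (k : ℕ) : L.splitVec (k + 1) = (L.A - L.θN k • 1) *ᵥ L.splitVec k := by
  have hA : Commute L.A (L.tauA k) := by
    induction k with
    | zero => exact Commute.one_right _
    | succ k ih =>
      exact ih.mul_right ((Commute.refl _).sub_right ((Commute.one_right _).smul_right _))
  have hcomm := (hA.sub_left ((Commute.one_left _).smul_left (L.θN k))).symm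
  rw [splitVec, splitVec, tauA, hcomm.eq, mulVec_mulVec]

theorem tauA_mul_Estar_zero (k : ℕ) :
    L.tauA k * L.Estar 0 = vecMulVec (L.splitVec k) (L.rowEs 0) := by
  rw [Estar_eq_vecMulVec, mul_vecMulVec, splitVec]

theorem rowE_dotProduct_splitVec (r : Fin (d+1)) (k : ℕ) :
    L.rowE r ⬝ᵥ L.splitVec k = L.tauS k (L.θ r) * (L.rowE r ⬝ᵥ L.colEs 0) := by
  refine dotProduct_mulVec_eq_mul_of_vecMulVec_mul
    ((L.rowE_dotProduct_colE r r).trans (if_pos rfl)) ?_ _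
  rw [← E_eq_vecMulVec, tauA_eq_sum, idempotent_mul_sum_smul L.E_mul]

theorem rowE_dotProduct_splitVec_eq_zero {r : Fin (d+1)} {k : ℕ} (hr : (r : ℕ) < k) :
    L.rowE r ⬝ᵥ L.splitVec k = 0 := by
  rw [rowE_dotProduct_splitVec, L.tauS_eq_zero hr, zero_mul]

theorem rowEs_dotProduct_splitVec_eq_zero {h : Fin (d+1)} {k : ℕ} (hk : k < (h : ℕ)) :
    L.rowEs h ⬝ᵥ L.splitVec k = 0 :=
  (L.Estar_mul_mul_Estar_eq_zero_iff _ h 0).mp (L.Estar_mul_tauA_mul_Estar_eq_zero (by simp; omega))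

theorem rowEs_dotProduct_splitVec_self_ne_zero (h : Fin (d+1)) :
    L.rowEs h ⬝ᵥ L.splitVec h ≠ 0 := by
  induction h using Fin.induction with
  | zero => simp [splitVec_zero, rowEs_dotProduct_colEs]
  | succ h ih =>
    have hA : L.rowEs h.succ ⬝ᵥ L.A *ᵥ L.colEs h.castSucc ≠ 0 := fun h0 =>
      L.strid1 h.succ h.castSucc (by simp) ((L.Estar_mul_mul_Estar_eq_zero_iff _ _ _).mpr h0)
    rw [Fin.val_succ, splitVec_succ, sub_mulVec, dotProduct_sub, smul_mulVec, one_mulVec,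
      dotProduct_smul, L.rowEs_dotProduct_splitVec_eq_zero (by simp), smul_zero, sub_zero,
      dotProduct_mulVec_eq_sum L.sum_vecMulVec_colEs_rowEs,
      Finset.sum_eq_single h.castSucc]
    · exact mul_ne_zero hA ih
    · intro t _ ht
      rcases lt_or_gt_of_ne ht with htl | htg
      · rw [(L.Estar_mul_mul_Estar_eq_zero_iff _ _ _).mp (L.strid0 _ _ _), zero_mul]
        simp [Fin.lt_def] at htl ⊢; omega
      · rw [← Fin.val_castSucc, L.rowEs_dotProduct_splitVec_eq_zero htg, mul_zero]
    · simp

theorem colEs_mem_span_splitVec (h : Fin (d+1)) :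
    L.colEs h ∈ Submodule.span K (Set.range L.splitVec) := by
  induction h using WellFoundedLT.induction with
  | ind h ih =>
  have hrest : ∑ t ∈ Finset.univ.erase h, (L.rowEs t ⬝ᵥ L.splitVec h) • L.colEs t ∈
      Submodule.span K (Set.range L.splitVec) := by
    refine Submodule.sum_mem _ fun t ht => ?_
    rcases lt_or_gt_of_ne (Finset.ne_of_mem_erase ht) with htl | htg
    · exact Submodule.smul_mem _ _ (ih t htl)
    · rw [L.rowEs_dotProduct_splitVec_eq_zero htg, zero_smul]
      exact Submodule.zero_mem _
  have hx := L.sum_smul_colEs (L.splitVec h)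
  rw [← Finset.add_sum_erase _ _ (Finset.mem_univ h), ← eq_sub_iff_add_eq] at hx
  refine (Submodule.smul_mem_iff _ (L.rowEs_dotProduct_splitVec_self_ne_zero h)).mp ?_
  rw [hx]
  exact sub_mem (Submodule.subset_span (Set.mem_range_self _)) hrest

theorem rowE_dotProduct_colEs_zero_ne_zero (r : Fin (d+1)) : L.rowE r ⬝ᵥ L.colEs 0 ≠ 0 := by
  intro h0
  have hker : ∀ v ∈ Submodule.span K (Set.range L.splitVec), L.rowE r ⬝ᵥ v = 0 := by
    intro v hv
    induction hv using Submodule.span_induction with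
    | mem x hx =>
      obtain ⟨k, rfl⟩ := hx
      rw [rowE_dotProduct_splitVec, h0, mul_zero]
    | zero => exact dotProduct_zero _
    | add x y _ _ hx hy => rw [dotProduct_add, hx, hy, add_zero]
    | smul a x _ hx => rw [dotProduct_smul, hx, smul_zero]
  have hu : L.colE r ∈ Submodule.span K (Set.range L.splitVec) := by
    rw [← L.sum_smul_colEs (L.colE r)]
    exact Submodule.sum_mem _ fun h _ => Submodule.smul_mem _ _ (L.colEs_mem_span_splitVec h)
  simpa [rowE_dotProduct_colE] using hker _ hu

theorem rowE_dotProduct_splitVec_self_ne_zero (r : Fin (d+1)) :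
    L.rowE r ⬝ᵥ L.splitVec r ≠ 0 := by
  rw [rowE_dotProduct_splitVec]
  exact mul_ne_zero (L.tauS_self_ne_zero r) (L.rowE_dotProduct_colEs_zero_ne_zero r)

theorem eq_zero_of_rowEs_dotProduct_of_rowE_dotProduct (m : ℕ) {v : Fin (d+1) → K}
    (hq : ∀ h : Fin (d+1), m ≤ h → L.rowEs h ⬝ᵥ v = 0)
    (he : ∀ r : Fin (d+1), (r : ℕ) < m → L.rowE r ⬝ᵥ v = 0) : v = 0 := by
  induction m generalizing v with
  | zero => simpa [hq] using (L.sum_smul_colEs v).symm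
  | succ m ih =>
    by_cases hm : m < d + 1
    swap
    · rw [← L.sum_smul_colE v]
      exact Finset.sum_eq_zero fun r _ => by rw [he r (by omega), zero_smul]
    set h₀ : Fin (d+1) := ⟨m, hm⟩
    set γ := (L.rowEs h₀ ⬝ᵥ v) / (L.rowEs h₀ ⬝ᵥ L.splitVec m)
    have hv : v = γ • L.splitVec m := by
      refine sub_eq_zero.mp (ih (fun h hh => ?_) (fun r hr => ?_))
      · rw [dotProduct_sub, dotProduct_smul, smul_eq_mul]
        rcases hh.lt_or_eq with hlt | heq
        · rw [hq h hlt, L.rowEs_dotProduct_splitVec_eq_zero hlt, mul_zero, sub_zero]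
        · obtain rfl : h = h₀ := Fin.ext heq.symm
          rw [div_mul_cancel₀ _ (L.rowEs_dotProduct_splitVec_self_ne_zero h₀), sub_self]
      · rw [dotProduct_sub, dotProduct_smul, he r (by omega),
          L.rowE_dotProduct_splitVec_eq_zero hr, smul_zero, sub_zero]
    have hγ : γ * (L.rowE h₀ ⬝ᵥ L.splitVec m) = 0 := by
      rw [← smul_eq_mul, ← dotProduct_smul, ← hv]
      exact he h₀ (Nat.lt_succ_self m)
    rw [hv, (mul_eq_zero.mp hγ).resolve_right (L.rowE_dotProduct_splitVec_self_ne_zero h₀),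
      zero_smul]

theorem rowE_dotProduct_Astar_mulVec_splitVec_eq_zero {r : Fin (d+1)} {k : ℕ}
    (hr : (r : ℕ) + 1 < k) : L.rowE r ⬝ᵥ L.Astar *ᵥ L.splitVec k = 0 := by
  rw [dotProduct_mulVec_eq_sum L.sum_vecMulVec_colE_rowE]
  refine Finset.sum_eq_zero fun s _ => ?_
  rcases lt_or_ge (s : ℕ) k with hs | hs
  · rw [L.rowE_dotProduct_splitVec_eq_zero hs, mul_zero]
  · rw [(L.E_mul_mul_E_eq_zero_iff _ _ _).mp (L.trid0 r s (by omega)), zero_mul]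

theorem rowE_dotProduct_Astar_mulVec_splitVec_of_val_eq_succ {r s : Fin (d+1)}
    (hs : (s : ℕ) = r + 1) : L.rowE r ⬝ᵥ L.Astar *ᵥ L.splitVec s =
      (L.rowE r ⬝ᵥ L.Astar *ᵥ L.colE s) * (L.rowE s ⬝ᵥ L.splitVec s) := by
  rw [dotProduct_mulVec_eq_sum L.sum_vecMulVec_colE_rowE]
  refine Finset.sum_eq_single s (fun t _ hts => ?_) (by simp)
  rcases lt_or_gt_of_ne hts with ht | ht
  · rw [L.rowE_dotProduct_splitVec_eq_zero ht, mul_zero]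
  · rw [(L.E_mul_mul_E_eq_zero_iff _ _ _).mp (L.trid0 r t (by have := Fin.lt_def.mp ht; omega)),
      zero_mul]

theorem exists_Astar_sub_mulVec_splitVec {i : ℕ} (hi : i < d) :
    ∃ f : K, (L.Astar - L.θsN (i+1) • 1) *ᵥ L.splitVec (i+1) = f • L.splitVec i := by
  set h₀ : Fin (d+1) := ⟨i, by omega⟩
  refine ⟨(L.rowEs h₀ ⬝ᵥ (L.Astar - L.θsN (i+1) • 1) *ᵥ L.splitVec (i+1)) /
      (L.rowEs h₀ ⬝ᵥ L.splitVec i),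
    sub_eq_zero.mp (L.eq_zero_of_rowEs_dotProduct_of_rowE_dotProduct i (fun h hh => ?_)
      (fun r hr => ?_))⟩
  · rw [dotProduct_sub, dotProduct_smul, smul_eq_mul]
    rcases hh.lt_or_eq with hlt | heq
    · have hy : L.rowEs h ⬝ᵥ (L.Astar - L.θsN (i+1) • 1) *ᵥ L.splitVec (i+1) = 0 := by
        rw [rowEs_dotProduct_Astar_sub_mulVec]
        rcases Nat.lt_or_eq_of_le (Nat.succ_le_of_lt hlt) with hlt' | heq'
        · rw [L.rowEs_dotProduct_splitVec_eq_zero hlt', mul_zero]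
        · rw [show i + 1 = (h : ℕ) from heq', θsN_val, sub_self, zero_mul]
      rw [hy, L.rowEs_dotProduct_splitVec_eq_zero hlt, mul_zero, sub_zero]
    · obtain rfl : h = h₀ := Fin.ext heq.symm
      rw [div_mul_cancel₀ _ (L.rowEs_dotProduct_splitVec_self_ne_zero h₀), sub_self]
  · rw [dotProduct_sub, sub_mulVec, dotProduct_sub, smul_mulVec, one_mulVec, dotProduct_smul,
      dotProduct_smul, L.rowE_dotProduct_Astar_mulVec_splitVec_eq_zero (by omega),
      L.rowE_dotProduct_splitVec_eq_zero (by omega), L.rowE_dotProduct_splitVec_eq_zero hr]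
    simp

theorem ne_zero_of_Astar_sub_mulVec_splitVec {i : ℕ} (hi : i < d) {f : K}
    (hf : (L.Astar - L.θsN (i+1) • 1) *ᵥ L.splitVec (i+1) = f • L.splitVec i) : f ≠ 0 := by
  rintro rfl
  set r : Fin (d+1) := ⟨i, by omega⟩
  set s : Fin (d+1) := ⟨i + 1, by omega⟩
  have hpair := congrArg (L.rowE r ⬝ᵥ ·) hf
  simp only [sub_mulVec, dotProduct_sub, smul_mulVec, one_mulVec, dotProduct_smul, zero_smul,
    dotProduct_zero] at hpair
  rw [show i + 1 = (s : ℕ) from rfl, L.rowE_dotProduct_Astar_mulVec_splitVec_of_val_eq_succ rfl,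
    L.rowE_dotProduct_splitVec_eq_zero (r := r) (k := s) (by simp [r, s]), smul_zero,
    sub_zero] at hpair
  refine mul_ne_zero (fun h0 => L.trid1 r s (by simp [r, s]) ?_)
    (L.rowE_dotProduct_splitVec_self_ne_zero s) hpair
  exact (L.E_mul_mul_E_eq_zero_iff _ _ _).mpr h0

theorem sub_mul_rowEs_zero_dotProduct_splitVec_succ {i : ℕ} {f : K}
    (hf : (L.Astar - L.θsN (i+1) • 1) *ᵥ L.splitVec (i+1) = f • L.splitVec i) :
    (L.θsN 0 - L.θsN (i+1)) * (L.rowEs 0 ⬝ᵥ L.splitVec (i+1)) =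
      f * (L.rowEs 0 ⬝ᵥ L.splitVec i) := by
  simpa [rowEs_dotProduct_Astar_sub_mulVec, ← L.θsN_val 0] using congrArg (L.rowEs 0 ⬝ᵥ ·) hf

/-- `q_0 ⬝ᵥ x_k = tr (τ_k(A) E*_0)` is the denominator of `φ_{k+1}`; without this, `φ_{k+1}`
would be the junk value of a division by zero. -/
theorem rowEs_zero_dotProduct_splitVec_ne_zero {k : ℕ} (hk : k ≤ d) :
    L.rowEs 0 ⬝ᵥ L.splitVec k ≠ 0 := by
  induction k with
  | zero => simp [splitVec_zero, rowEs_dotProduct_colEs]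
  | succ k ih =>
    obtain ⟨f, hf⟩ := L.exists_Astar_sub_mulVec_splitVec (by omega : k < d)
    intro h0
    have hrel := L.sub_mul_rowEs_zero_dotProduct_splitVec_succ hf
    rw [h0, mul_zero] at hrel
    exact mul_ne_zero (L.ne_zero_of_Astar_sub_mulVec_splitVec (by omega) hf) (ih (by omega))
      hrel.symm

theorem trace_tauA_mul_Estar_zero (k : ℕ) :
    (L.tauA k * L.Estar 0).trace = L.rowEs 0 ⬝ᵥ L.splitVec k := by
  rw [tauA_mul_Estar_zero, trace_vecMulVec, dotProduct_comm]

theorem Astar_sub_mulVec_splitVec {i : ℕ} (hi : i < d) :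
    (L.Astar - L.θsN (i+1) • 1) *ᵥ L.splitVec (i+1) = L.varphi (i+1) • L.splitVec i := by
  obtain ⟨f, hf⟩ := L.exists_Astar_sub_mulVec_splitVec hi
  rw [hf, varphi, Nat.add_sub_cancel, trace_tauA_mul_Estar_zero, trace_tauA_mul_Estar_zero,
    L.sub_mul_rowEs_zero_dotProduct_splitVec_succ hf,
    mul_div_cancel_right₀ _ (L.rowEs_zero_dotProduct_splitVec_ne_zero hi.le)]

theorem Astar_sub_mul_tauA_mul_Estar_zero {i : ℕ} (hi : i < d) :
    (L.Astar - L.θsN (i+1) • 1) * (L.tauA (i+1) * L.Estar 0) =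
      L.varphi (i+1) • (L.tauA i * L.Estar 0) := by
  rw [tauA_mul_Estar_zero, tauA_mul_Estar_zero, mul_vecMulVec, L.Astar_sub_mulVec_splitVec hi,
    smul_vecMulVec]

theorem E_zero_mul_tausA_mul_tauA_mul_Estar_zero_self {i : ℕ} (hi : i ≤ d) :
    L.E 0 * L.tausA i * L.tauA i * L.Estar 0 = L.varphiProd i • (L.E 0 * L.Estar 0) := by
  induction i with
  | zero => simp [tausA, tauA, varphiProd]
  | succ i ih =>
    have hshift : L.Astar - L.θsN i • 1 =
        (L.Astar - L.θsN (i+1) • 1) + (L.θsN (i+1) - L.θsN i) • 1 := by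
      rw [sub_smul]; abel
    calc L.E 0 * L.tausA (i+1) * L.tauA (i+1) * L.Estar 0
        = L.E 0 * L.tausA i * ((L.Astar - L.θsN (i+1) • 1) * (L.tauA (i+1) * L.Estar 0)) +
            (L.θsN (i+1) - L.θsN i) • (L.E 0 * L.tausA i * L.tauA (i+1) * L.Estar 0) := by
          rw [tausA, hshift]
          simp only [Matrix.mul_add, Matrix.add_mul, Matrix.mul_smul, Matrix.smul_mul,
            Matrix.mul_one, Matrix.mul_assoc]
      _ = L.varphi (i+1) • (L.E 0 * L.tausA i * L.tauA i * L.Estar 0) := by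
          rw [L.Astar_sub_mul_tauA_mul_Estar_zero (by omega),
            L.E_zero_mul_tausA_mul_tauA_mul_Estar_zero_of_lt (Nat.lt_succ_self i), smul_zero,
            add_zero, Matrix.mul_smul]
          simp only [Matrix.mul_assoc]
      _ = L.varphiProd (i+1) • (L.E 0 * L.Estar 0) := by
          rw [ih (by omega), smul_smul, varphiProd, varphiProd, Finset.prod_range_succ, mul_comm]

end LeonardSystem

/-- `E_0 τ*_i(A*) τ_j(A) E*_0 = δ_{ij} φ_1⋯φ_i E_0 E*_0`. -/
theorem LeonardSystem.reduction_tau {K : Type*} [Field K] {d : ℕ}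
    (L : LeonardSystem K d) :
    ∀ i j : Fin (d+1),
      L.E 0 * L.tausA (i : ℕ) * L.tauA (j : ℕ) * L.Estar 0 =
        if i = j then L.varphiProd (i : ℕ) • (L.E 0 * L.Estar 0) else 0 := by
  intro i j
  split_ifs with hij
  · subst hij
    exact L.E_zero_mul_tausA_mul_tauA_mul_Estar_zero_self (Nat.lt_succ_iff.mp i.isLt)
  · rcases lt_or_gt_of_ne (Fin.val_ne_of_ne hij) with h | h
    · exact L.E_zero_mul_tausA_mul_tauA_mul_Estar_zero_of_lt h
    · exact L.E_zero_mul_tausA_mul_tauA_mul_Estar_zero_of_gt h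
end

section
/- Let Φ be a Leonard system. Then tr(E_r E*_0), tr(E_r E*_d), tr(E*_r E_0), tr(E*_r E_d) are all nonzero for 0 ≤ r ≤ d. -/
open Matrix Polynomial

/-!
Every primitive idempotent of a Leonard system has rank one, and for rank-one matrices
`tr (F * G) ≠ 0` as soon as `F * G ≠ 0` and `G * F ≠ 0`. If `E_r E*_0 = 0`, then, since
`E_r A = θ_r E_r` and `A` acts irreducibly tridiagonally on the `E*_i`, the products
`E_r E*_1, E_r E*_2, …` vanish in turn, so `E_r = 0`; transposing gives `E*_0 E_r ≠ 0`.
Reversing the order of the `E*_i` and passing to the dual system give the other traces.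
-/

namespace Matrix

variable {ι R : Type*} [Fintype ι]

theorem mul_vecMulVec_mul_eq_zero [CommSemiring R] [NoZeroDivisors R] {P Q : Matrix ι ι R}
    {u v : ι → R} (h : P * vecMulVec u v * Q = 0) :
    P * vecMulVec u v = 0 ∨ vecMulVec u v * Q = 0 := by
  rw [mul_vecMulVec, vecMulVec_mul, vecMulVec_eq_zero] at h
  rw [mul_vecMulVec, vecMulVec_mul, vecMulVec_eq_zero, vecMulVec_eq_zero]
  tauto

theorem trace_vecMulVec_mul_vecMulVec_ne_zero [CommSemiring R] [NoZeroDivisors R]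
    {p q u v : ι → R} (h₁ : vecMulVec p q * vecMulVec u v ≠ 0)
    (h₂ : vecMulVec u v * vecMulVec p q ≠ 0) :
    (vecMulVec p q * vecMulVec u v).trace ≠ 0 := by
  rw [vecMulVec_mul_vecMulVec] at h₁ h₂ ⊢
  rw [trace_vecMulVec, dotProduct_smul, smul_eq_mul, dotProduct_comm p]
  exact mul_ne_zero (fun h => h₁ (by simp [h])) (fun h => h₂ (by simp [h]))

end Matrix

theorem OrthogonalIdempotents.exists_eq_vecMulVec {ι K : Type*} [Fintype ι] [DecidableEq ι]
    [Field K] {G : ι → Matrix ι ι K} (hG : OrthogonalIdempotents G) (hG₀ : ∀ i, G i ≠ 0)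
    (r : ι) : ∃ u v : ι → K, G r = vecMulVec u v := by
  have hw : ∀ i, ∃ x, G i *ᵥ x ≠ 0 := fun i => by
    by_contra! h
    exact hG₀ i (ext_of_mulVec_single fun j => by simp only [h, zero_mulVec])
  choose x hx using hw
  set w := fun i => G i *ᵥ x i
  have hGw : ∀ i j, G i *ᵥ w j = if i = j then w j else 0 := by
    intro i j
    simp only [w, mulVec_mulVec, hG.mul_eq]
    split_ifs with h <;> simp [h]
  have hli : LinearIndependent K w := by
    rw [Fintype.linearIndependent_iff]
    intro g hg i
    have := congrArg (G i *ᵥ ·) hg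
    simp only [mulVec_sum, mulVec_smul, hGw, smul_ite, smul_zero, Finset.sum_ite_eq,
      Finset.mem_univ, if_true, mulVec_zero] at this
    exact (smul_eq_zero.mp this).resolve_right (hx i)
  -- `card ι` independent vectors in `ι → K` form a basis, and `G r` kills all of it but `w r`.
  let β := basisOfLinearIndependentOfCardEqFinrank' w hli
    (Module.finrank_fintype_fun_eq_card K).symm
  have hGr : ∀ y, G r *ᵥ y = β.repr y r • w r := fun y => by
    conv_lhs => rw [← β.sum_repr y]
    simp [β, mulVec_sum, mulVec_smul, hGw]
  refine ⟨w r, fun j => β.repr (Pi.single j 1) r, ext_of_mulVec_single fun j => ?_⟩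
  rw [hGr, mulVec_single_one]
  ext a
  simp [vecMulVec_apply, mul_comm]

theorem OrthogonalIdempotents.mul_sum_smul {K R ι : Type*} [CommSemiring K] [Semiring R]
    [Algebra K R] [Fintype ι] [DecidableEq ι] {e : ι → R} (he : OrthogonalIdempotents e)
    (θ : ι → K) (r : ι) : e r * ∑ i, θ i • e i = θ r • e r := by
  simp only [Finset.mul_sum, mul_smul_comm, he.mul_eq, smul_ite, smul_zero, Finset.sum_ite_eq,
    Finset.mem_univ, if_true]

theorem OrthogonalIdempotents.sum_smul_mul {K R ι : Type*} [CommSemiring K] [Semiring R]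
    [Algebra K R] [Fintype ι] [DecidableEq ι] {e : ι → R} (he : OrthogonalIdempotents e)
    (θ : ι → K) (r : ι) : (∑ i, θ i • e i) * e r = θ r • e r := by
  simp only [Finset.sum_mul, smul_mul_assoc, he.mul_eq, smul_ite, smul_zero, Finset.sum_ite_eq',
    Finset.mem_univ, if_true]

theorem CompleteOrthogonalIdempotents.transpose {ι κ R : Type*} [Fintype ι] [Fintype κ]
    [DecidableEq ι] [CommSemiring R] {G : κ → Matrix ι ι R}
    (hG : CompleteOrthogonalIdempotents G) : CompleteOrthogonalIdempotents fun k => (G k)ᵀ := by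
  rw [CompleteOrthogonalIdempotents.iff_ortho_complete]
  refine ⟨fun i j hij => ?_, ?_⟩
  · simp only [← transpose_mul, hG.ortho hij.symm, transpose_zero]
  · rw [← transpose_sum, hG.complete, transpose_one]

structure IsIrreducibleTridiagonal {R : Type*} [Semiring R] {m : ℕ} (e : Fin (m+1) → R) (b : R) :
    Prop where
  mul_mul_eq_zero : ∀ i j : Fin (m+1), ((i : ℤ) - (j : ℤ)).natAbs > 1 → e i * b * e j = 0
  mul_mul_ne_zero : ∀ i j : Fin (m+1), ((i : ℤ) - (j : ℤ)).natAbs = 1 → e i * b * e j ≠ 0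

namespace IsIrreducibleTridiagonal

variable {m : ℕ}

theorem comp_rev {R : Type*} [Semiring R] {e : Fin (m+1) → R} {b : R}
    (h : IsIrreducibleTridiagonal e b) : IsIrreducibleTridiagonal (e ∘ Fin.rev) b := by
  have hrev : ∀ i j : Fin (m+1), (((Fin.rev i : ℕ) : ℤ) - (Fin.rev j : ℕ)).natAbs
      = ((i : ℤ) - (j : ℤ)).natAbs := fun i j => by
    simp only [Fin.val_rev]; omega
  exact ⟨fun i j hij => h.mul_mul_eq_zero _ _ (by rwa [hrev]),
    fun i j hij => h.mul_mul_ne_zero _ _ (by rwa [hrev])⟩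

theorem transpose {ι R : Type*} [Fintype ι] [DecidableEq ι] [CommSemiring R]
    {G : Fin (m+1) → Matrix ι ι R} {B : Matrix ι ι R} (h : IsIrreducibleTridiagonal G B) :
    IsIrreducibleTridiagonal (fun k => (G k)ᵀ) Bᵀ := by
  have hswap : ∀ i j : Fin (m+1), ((j : ℤ) - (i : ℤ)).natAbs = ((i : ℤ) - (j : ℤ)).natAbs :=
    fun i j => by omega
  refine ⟨fun i j hij => ?_, fun i j hij => ?_⟩
  · rw [← transpose_mul, ← transpose_mul, ← Matrix.mul_assoc,
      h.mul_mul_eq_zero j i (by rwa [hswap]), transpose_zero]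
  · rw [← transpose_mul, ← transpose_mul, ← Matrix.mul_assoc, Ne, transpose_eq_zero]
    exact h.mul_mul_ne_zero j i (by rwa [hswap])

end IsIrreducibleTridiagonal

section Tridiagonal

variable {ι K : Type*} [Fintype ι] [DecidableEq ι] [Field K] {m : ℕ}
  {G : Fin (m+1) → Matrix ι ι K} {B F : Matrix ι ι K} {θ : K}

/-- If `F * G 0 = 0`, then `F` kills every `G k` in turn: `F * G (k+1)` times the nonzero
rank-one `G (k+1) * B * G k` is `F * B * G k = θ • F * G k = 0`. -/
theorem CompleteOrthogonalIdempotents.eq_zero_of_mul_eq_zero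
    (hG : CompleteOrthogonalIdempotents G) (hG₁ : ∀ k, ∃ u v, G k = vecMulVec u v)
    (hB : IsIrreducibleTridiagonal G B) (hFB : F * B = θ • F) (h₀ : F * G 0 = 0) : F = 0 := by
  suffices h : ∀ k : Fin (m+1), ∀ l ≤ k, F * G l = 0 by
    rw [← Matrix.mul_one F, ← hG.complete, Finset.mul_sum]
    exact Finset.sum_eq_zero fun l _ => h (Fin.last m) l (Fin.le_last l)
  intro k
  induction k using Fin.induction with
  | zero => intro l hl; rwa [nonpos_iff_eq_zero.mp hl]
  | succ k ih =>
    intro l hl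
    rcases hl.lt_or_eq with hl | rfl
    · exact ih l (Fin.le_castSucc_iff.mpr hl)
    have hterm : ∀ l, l ≠ k.succ → F * G l * B * G k.castSucc = 0 := by
      intro l hl
      by_cases hlk : l ≤ k.castSucc
      · rw [ih l hlk, Matrix.zero_mul, Matrix.zero_mul]
      have hfar : G l * B * G k.castSucc = 0 := hB.mul_mul_eq_zero _ _ (by
        rw [Fin.le_def, Fin.val_castSucc] at hlk
        rw [Ne, Fin.ext_iff, Fin.val_succ] at hl
        rw [Fin.val_castSucc]; omega)
      calc F * G l * B * G k.castSucc = F * (G l * G l) * B * G k.castSucc := by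
            rw [(hG.idem l).eq]
        _ = F * G l * (G l * B * G k.castSucc) := by simp only [Matrix.mul_assoc]
        _ = 0 := by rw [hfar, Matrix.mul_zero]
    have hstep : F * G k.succ * (B * G k.castSucc) = 0 := by
      calc F * G k.succ * (B * G k.castSucc) = ∑ l, F * G l * B * G k.castSucc := by
            rw [Finset.sum_eq_single k.succ (fun l _ hl => hterm l hl) (by simp)]
            simp only [Matrix.mul_assoc]
        _ = F * B * G k.castSucc := by
            rw [← Finset.sum_mul, ← Finset.sum_mul, ← Finset.mul_sum, hG.complete,
              Matrix.mul_one]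
        _ = 0 := by rw [hFB, smul_mul_assoc, ih _ le_rfl, smul_zero]
    obtain ⟨u, v, huv⟩ := hG₁ k.succ
    rw [huv] at hstep ⊢
    refine (mul_vecMulVec_mul_eq_zero hstep).resolve_right fun h => ?_
    rw [← huv, ← Matrix.mul_assoc] at h
    exact hB.mul_mul_ne_zero _ _ (by simp only [Fin.val_succ, Fin.val_castSucc]; omega) h

theorem trace_mul_ne_zero_of_isIrreducibleTridiagonal
    (hG : CompleteOrthogonalIdempotents G) (hG₁ : ∀ k, ∃ u v, G k = vecMulVec u v)
    (hB : IsIrreducibleTridiagonal G B) (hF₁ : ∃ p q, F = vecMulVec p q) (hF₀ : F ≠ 0)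
    (hFB : F * B = θ • F) (hBF : B * F = θ • F) : (F * G 0).trace ≠ 0 := by
  have h₁ : F * G 0 ≠ 0 := fun h => hF₀ (hG.eq_zero_of_mul_eq_zero hG₁ hB hFB h)
  have h₂ : G 0 * F ≠ 0 := fun h => hF₀ <| transpose_eq_zero.mp <|
    hG.transpose.eq_zero_of_mul_eq_zero
      (fun k => by obtain ⟨u, v, huv⟩ := hG₁ k; exact ⟨v, u, by rw [huv, transpose_vecMulVec]⟩)
      hB.transpose (θ := θ) (by rw [← transpose_mul, hBF, transpose_smul])
      (by rw [← transpose_mul, h, transpose_zero])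
  obtain ⟨p, q, rfl⟩ := hF₁
  obtain ⟨u, v, huv⟩ := hG₁ 0
  rw [huv] at h₁ h₂ ⊢
  exact trace_vecMulVec_mul_vecMulVec_ne_zero h₁ h₂

end Tridiagonal

namespace LeonardSystem

variable {K : Type*} [Field K] {d : ℕ} (L : LeonardSystem K d)

/-- The dual Leonard system `Φ*`. -/
def dual : LeonardSystem K d :=
  ⟨L.Astar, L.A, L.Estar, L.E, L.θs, L.θ, L.θs_inj, L.θ_inj, L.Es_ne, L.E_ne, L.Es_mul, L.E_mul,
    L.Es_sum, L.E_sum, L.As_eq, L.A_eq, L.strid0, L.strid1, L.trid0, L.trid1⟩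

theorem completeOrthogonalIdempotents_E : CompleteOrthogonalIdempotents L.E :=
  ⟨OrthogonalIdempotents.iff_mul_eq.mpr L.E_mul, L.E_sum⟩

theorem exists_E_eq_vecMulVec (r : Fin (d+1)) : ∃ u v, L.E r = vecMulVec u v :=
  L.completeOrthogonalIdempotents_E.exists_eq_vecMulVec L.E_ne r

theorem E_mul_A (r : Fin (d+1)) : L.E r * L.A = L.θ r • L.E r := by
  rw [L.A_eq, L.completeOrthogonalIdempotents_E.mul_sum_smul]

theorem A_mul_E (r : Fin (d+1)) : L.A * L.E r = L.θ r • L.E r := by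
  rw [L.A_eq, L.completeOrthogonalIdempotents_E.sum_smul_mul]

theorem isIrreducibleTridiagonal_Estar_A : IsIrreducibleTridiagonal L.Estar L.A :=
  ⟨L.strid0, L.strid1⟩

theorem trace_E_mul_Estar_ne_zero (r : Fin (d+1)) :
    (L.E r * L.Estar 0).trace ≠ 0 ∧ (L.E r * L.Estar (Fin.last d)).trace ≠ 0 := by
  have hEstar := L.dual.completeOrthogonalIdempotents_E
  refine ⟨trace_mul_ne_zero_of_isIrreducibleTridiagonal hEstar L.dual.exists_E_eq_vecMulVec
    L.isIrreducibleTridiagonal_Estar_A (L.exists_E_eq_vecMulVec r) (L.E_ne r) (L.E_mul_A r)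
    (L.A_mul_E r), ?_⟩
  rw [← Fin.rev_zero]
  exact trace_mul_ne_zero_of_isIrreducibleTridiagonal (G := L.Estar ∘ Fin.rev)
    ((CompleteOrthogonalIdempotents.equiv Fin.revPerm).mpr hEstar)
    (fun k => L.dual.exists_E_eq_vecMulVec _) L.isIrreducibleTridiagonal_Estar_A.comp_rev
    (L.exists_E_eq_vecMulVec r) (L.E_ne r) (L.E_mul_A r) (L.A_mul_E r)

end LeonardSystem

/-- The traces `tr(E_rE*_0)`, `tr(E_rE*_d)`, `tr(E*_rE_0)`, `tr(E*_rE_d)` are nonzero. -/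
theorem LeonardSystem.trace_ne_zero {K : Type*} [Field K] {d : ℕ}
    (L : LeonardSystem K d) :
    ∀ r : Fin (d+1),
      (L.E r * L.Estar 0).trace ≠ 0 ∧
      (L.E r * L.Estar (Fin.last d)).trace ≠ 0 ∧
      (L.Estar r * L.E 0).trace ≠ 0 ∧
      (L.Estar r * L.E (Fin.last d)).trace ≠ 0 := by
  intro r
  obtain ⟨h₀, hd⟩ := L.trace_E_mul_Estar_ne_zero r
  obtain ⟨h₀', hd'⟩ := L.dual.trace_E_mul_Estar_ne_zero r
  exact ⟨h₀, hd, h₀', hd'⟩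
end
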